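/- Specific heat inequality: Let s(ρ,e) be a C² entropy with s_e > 0 satisfying the convexity conditions, and let c_p := s_e^{−1}(p_ρ s_e − p_e s_ρ)/(p_ρ T_e − p_e T_ρ) and T_e := ∂T/∂e = −s_{ee}/s_e². Then c_p · T_e ≥ 1 at every (ρ,e) ∈ (0,∞)², with strict inequality c_p · T_e > 1 wherever p_e ≠ 0. In particular c_p > 0 everywhere. -/

import Mathlib

noncomputable section

open Real

/-- Partial derivative with respect to the first variable (`ρ`). -/
def D1 (f : ℝ × ℝ → ℝ) (x : ℝ × ℝ) : ℝ := fderiv ℝ f x (1, 0)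

/-- Partial derivative with respect to the second variable (`e`). -/
def D2 (f : ℝ × ℝ → ℝ) (x : ℝ × ℝ) : ℝ := fderiv ℝ f x (0, 1)

/-- The state domain `(0,∞)²`. -/
def dom : Set (ℝ × ℝ) := {x : ℝ × ℝ | 0 < x.1 ∧ 0 < x.2}

/-- `s_ρ` -/
def sRho (s : ℝ × ℝ → ℝ) : ℝ × ℝ → ℝ := D1 s

/-- `s_e` -/
def sE (s : ℝ × ℝ → ℝ) : ℝ × ℝ → ℝ := D2 s

/-- `s_{ρe}` -/
def sRhoE (s : ℝ × ℝ → ℝ) : ℝ × ℝ → ℝ := D1 (D2 s)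

/-- `s_{ee}` -/
def sEE (s : ℝ × ℝ → ℝ) : ℝ × ℝ → ℝ := D2 (D2 s)

/-- The pressure `p := -ρ² s_ρ / s_e`. -/
def press (s : ℝ × ℝ → ℝ) (x : ℝ × ℝ) : ℝ := -x.1 ^ 2 * sRho s x / sE s x

/-- The temperature `T := 1 / s_e`. -/
def temp (s : ℝ × ℝ → ℝ) (x : ℝ × ℝ) : ℝ := (sE s x)⁻¹

/-- `∂_ρ(ρ² s_ρ)` -/
def dRho2sRho (s : ℝ × ℝ → ℝ) (x : ℝ × ℝ) : ℝ :=
  deriv (fun r : ℝ => r ^ 2 * sRho s (r, x.2)) x.1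

/-- `det Σ := ∂_ρ(ρ² s_ρ)·s_{ee} - ρ² s_{ρe}²`. -/
def detSigma (s : ℝ × ℝ → ℝ) (x : ℝ × ℝ) : ℝ :=
  dRho2sRho s x * sEE s x - x.1 ^ 2 * (sRhoE s x) ^ 2

/-- `p_ρ` -/
def pRho (s : ℝ × ℝ → ℝ) : ℝ × ℝ → ℝ := D1 (press s)

/-- `p_e` -/
def pE (s : ℝ × ℝ → ℝ) : ℝ × ℝ → ℝ := D2 (press s)

/-- `T_ρ` -/
def tRho (s : ℝ × ℝ → ℝ) : ℝ × ℝ → ℝ := D1 (temp s)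

/-- `T_e` -/
def tE (s : ℝ × ℝ → ℝ) : ℝ × ℝ → ℝ := D2 (temp s)

/-- The specific heat at constant pressure
`c_p := s_e⁻¹ (p_ρ s_e - p_e s_ρ) / (p_ρ T_e - p_e T_ρ)`. -/
def cP (s : ℝ × ℝ → ℝ) (x : ℝ × ℝ) : ℝ :=
  (sE s x)⁻¹ * (pRho s x * sE s x - pE s x * sRho s x) /
    (pRho s x * tE s x - pE s x * tRho s x)

/-- The squared sound speed `c² := p_ρ - (s_ρ/s_e) p_e`. -/
def cSq (s : ℝ × ℝ → ℝ) (x : ℝ × ℝ) : ℝ := pRho s x - sRho s x / sE s x * pE s x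

/-- The convexity conditions `∂_ρ(ρ² s_ρ) < 0`, `s_{ee} < 0`, `det Σ > 0` on the domain. -/
def Convexity (s : ℝ × ℝ → ℝ) : Prop :=
  ∀ x ∈ dom, dRho2sRho s x < 0 ∧ sEE s x < 0 ∧ 0 < detSigma s x

/-!
Differentiating `p = -ρ² s_ρ / s_e` and `T = 1 / s_e` expresses `p_ρ, p_e, T_ρ, T_e` through
`s_ρ, s_e, s_{ρe}, s_{ee}` and `∂_ρ(ρ² s_ρ)`, once the mixed partials `s_{eρ} = s_{ρe}` are
identified. Then `p_ρ T_e - p_e T_ρ = det Σ / s_e³`, and clearing denominators gives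
`c_p T_e = 1 + s_e² p_e² / (ρ² det Σ)`, so `det Σ > 0` yields both inequalities.
Finally `T_e = -s_{ee} / s_e² > 0`, so `c_p > 0`.
-/

section DirectionalDerivatives

variable {E : Type*} [NormedAddCommGroup E] [NormedSpace ℝ E] {f g : E → ℝ} {x : E}

theorem fderiv_fun_mul_apply (hf : DifferentiableAt ℝ f x) (hg : DifferentiableAt ℝ g x) (v : E) :
    fderiv ℝ (fun y => f y * g y) x v = fderiv ℝ f x v * g x + f x * fderiv ℝ g x v := by
  rw [fderiv_fun_mul hf hg]
  simp only [add_apply, smul_apply, smul_eq_mul]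
  ring

theorem fderiv_fun_inv_apply (hg : DifferentiableAt ℝ g x) (hx : g x ≠ 0) (v : E) :
    fderiv ℝ (fun y => (g y)⁻¹) x v = -fderiv ℝ g x v / g x ^ 2 := by
  have h : HasFDerivAt (fun y => (g y)⁻¹) (-(g x ^ 2)⁻¹ • fderiv ℝ g x) x :=
    (hasDerivAt_inv hx).comp_hasFDerivAt x hg.hasFDerivAt
  rw [h.fderiv, smul_apply, smul_eq_mul]
  ring

theorem fderiv_fun_div_apply (hf : DifferentiableAt ℝ f x) (hg : DifferentiableAt ℝ g x)
    (hx : g x ≠ 0) (v : E) :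
    fderiv ℝ (fun y => f y / g y) x v =
      (fderiv ℝ f x v * g x - f x * fderiv ℝ g x v) / g x ^ 2 := by
  have hg' : DifferentiableAt ℝ (fun y => (g y)⁻¹) x := hg.inv hx
  simp only [div_eq_mul_inv]
  rw [fderiv_fun_mul_apply hf hg', fderiv_fun_inv_apply hg hx]
  field_simp
  ring

theorem ContDiffAt.differentiableAt_fderiv_apply (hf : ContDiffAt ℝ 2 f x) (v : E) :
    DifferentiableAt ℝ (fun y => fderiv ℝ f y v) x :=
  ((hf.fderiv_right (m := 1) (by norm_num)).differentiableAt (by norm_num)).clm_apply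
    (differentiableAt_const v)

theorem ContDiffAt.fderiv_fderiv_apply_comm (hf : ContDiffAt ℝ 2 f x) (v w : E) :
    fderiv ℝ (fun y => fderiv ℝ f y v) x w = fderiv ℝ (fun y => fderiv ℝ f y w) x v := by
  have hdiff : DifferentiableAt ℝ (fderiv ℝ f) x :=
    (hf.fderiv_right (m := 1) (by norm_num)).differentiableAt (by norm_num)
  simp only [fderiv_clm_apply hdiff (differentiableAt_const _), fderiv_fun_const, Pi.zero_apply,
    ContinuousLinearMap.comp_zero, zero_add, ContinuousLinearMap.flip_apply]
  exact hf.isSymmSndFDerivAt (by simp) w v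

end DirectionalDerivatives

theorem D2_D1_eq_D1_D2 {f : ℝ × ℝ → ℝ} {x : ℝ × ℝ} (hf : ContDiffAt ℝ 2 f x) :
    D2 (D1 f) x = D1 (D2 f) x :=
  hf.fderiv_fderiv_apply_comm _ _

theorem DifferentiableAt.hasDerivAt_slice_fst {f : ℝ × ℝ → ℝ} {x : ℝ × ℝ}
    (hf : DifferentiableAt ℝ f x) : HasDerivAt (fun r => f (r, x.2)) (D1 f x) x.1 :=
  hf.hasFDerivAt.comp_hasDerivAt x.1 ((hasDerivAt_id x.1).prodMk (hasDerivAt_const x.1 x.2))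

theorem fderiv_neg_fst_sq_apply (x v : ℝ × ℝ) :
    fderiv ℝ (fun y : ℝ × ℝ => -y.1 ^ 2) x v = -(2 * x.1 * v.1) := by
  rw [(hasFDerivAt_fst.pow 2).fun_neg.fderiv]
  simp

theorem isOpen_dom : IsOpen dom :=
  (isOpen_lt continuous_const continuous_fst).inter (isOpen_lt continuous_const continuous_snd)

section Thermodynamics

variable {s : ℝ × ℝ → ℝ} {x : ℝ × ℝ}

theorem tE_eq (hs : ContDiffAt ℝ 2 s x) (hse : sE s x ≠ 0) :
    tE s x = -sEE s x / sE s x ^ 2 :=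
  fderiv_fun_inv_apply (hs.differentiableAt_fderiv_apply _) hse _

theorem tRho_eq (hs : ContDiffAt ℝ 2 s x) (hse : sE s x ≠ 0) :
    tRho s x = -sRhoE s x / sE s x ^ 2 :=
  fderiv_fun_inv_apply (hs.differentiableAt_fderiv_apply _) hse _

theorem dRho2sRho_eq (hs : ContDiffAt ℝ 2 s x) :
    dRho2sRho s x = 2 * x.1 * sRho s x + x.1 ^ 2 * D1 (sRho s) x := by
  have hA : DifferentiableAt ℝ (sRho s) x := hs.differentiableAt_fderiv_apply _
  rw [dRho2sRho, ((hasDerivAt_pow 2 x.1).fun_mul hA.hasDerivAt_slice_fst).deriv]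
  simp only [Nat.cast_ofNat]
  ring

theorem pRho_eq (hs : ContDiffAt ℝ 2 s x) (hse : sE s x ≠ 0) :
    pRho s x = (x.1 ^ 2 * sRho s x * sRhoE s x - dRho2sRho s x * sE s x) / sE s x ^ 2 := by
  have hA : DifferentiableAt ℝ (sRho s) x := hs.differentiableAt_fderiv_apply _
  have hB : DifferentiableAt ℝ (sE s) x := hs.differentiableAt_fderiv_apply _
  have hsq : DifferentiableAt ℝ (fun y : ℝ × ℝ => -y.1 ^ 2) x := by fun_prop
  change fderiv ℝ (fun y => -y.1 ^ 2 * sRho s y / sE s y) x (1, 0) = _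
  rw [fderiv_fun_div_apply (hsq.fun_mul hA) hB hse, fderiv_fun_mul_apply hsq hA,
    fderiv_neg_fst_sq_apply, dRho2sRho_eq hs]
  change ((-(2 * x.1 * 1) * sRho s x + -x.1 ^ 2 * D1 (sRho s) x) * sE s x
      - -x.1 ^ 2 * sRho s x * sRhoE s x) / sE s x ^ 2 = _
  ring

theorem pE_eq (hs : ContDiffAt ℝ 2 s x) (hse : sE s x ≠ 0) :
    pE s x = x.1 ^ 2 * (sRho s x * sEE s x - sRhoE s x * sE s x) / sE s x ^ 2 := by
  have hA : DifferentiableAt ℝ (sRho s) x := hs.differentiableAt_fderiv_apply _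
  have hB : DifferentiableAt ℝ (sE s) x := hs.differentiableAt_fderiv_apply _
  have hsq : DifferentiableAt ℝ (fun y : ℝ × ℝ => -y.1 ^ 2) x := by fun_prop
  change fderiv ℝ (fun y => -y.1 ^ 2 * sRho s y / sE s y) x (0, 1) = _
  rw [fderiv_fun_div_apply (hsq.fun_mul hA) hB hse, fderiv_fun_mul_apply hsq hA,
    fderiv_neg_fst_sq_apply]
  change ((-(2 * x.1 * 0) * sRho s x + -x.1 ^ 2 * D2 (D1 s) x) * sE s x
      - -x.1 ^ 2 * sRho s x * sEE s x) / sE s x ^ 2 = _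
  rw [D2_D1_eq_D1_D2 hs]
  simp only [sRhoE]
  ring

theorem pRho_mul_tE_sub_pE_mul_tRho (hs : ContDiffAt ℝ 2 s x) (hse : sE s x ≠ 0) :
    pRho s x * tE s x - pE s x * tRho s x = detSigma s x / sE s x ^ 3 := by
  rw [pRho_eq hs hse, pE_eq hs hse, tE_eq hs hse, tRho_eq hs hse, detSigma]
  field_simp
  ring

theorem cP_mul_tE_eq (hs : ContDiffAt ℝ 2 s x) (hse : sE s x ≠ 0)
    (hdet : detSigma s x ≠ 0) :
    cP s x * tE s x = 1 + (sE s x * pE s x) ^ 2 / (x.1 ^ 2 * detSigma s x) := by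
  rw [cP, pRho_mul_tE_sub_pE_mul_tRho hs hse, pRho_eq hs hse, pE_eq hs hse, tE_eq hs hse]
  field_simp
  rw [detSigma]
  ring

end Thermodynamics

/-- **Specific heat inequality:** `c_p · T_e ≥ 1`, with strict inequality wherever `p_e ≠ 0`;
in particular `c_p > 0`. -/
theorem cP_tE_ge_one
    (s : ℝ × ℝ → ℝ) (hs : ContDiffOn ℝ 2 s dom)
    (hse : ∀ x ∈ dom, 0 < sE s x) (hconv : Convexity s) :
    ∀ x ∈ dom,
      tE s x = -sEE s x / (sE s x) ^ 2 ∧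
      1 ≤ cP s x * tE s x ∧
      (pE s x ≠ 0 → 1 < cP s x * tE s x) ∧
      0 < cP s x := by
  intro x hx
  have hsx : ContDiffAt ℝ 2 s x := hs.contDiffAt (isOpen_dom.mem_nhds hx)
  have hsex : sE s x ≠ 0 := (hse x hx).ne'
  obtain ⟨-, hsEE, hdet⟩ := hconv x hx
  have htE : tE s x = -sEE s x / sE s x ^ 2 := tE_eq hsx hsex
  have hcPtE := cP_mul_tE_eq hsx hsex hdet.ne'
  have hge : 1 ≤ cP s x * tE s x := by
    rw [hcPtE]
    exact le_add_of_nonneg_right (by positivity)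
  refine ⟨htE, hge, fun hpE => ?_, ?_⟩
  · have hρ : 0 < x.1 := hx.1
    rw [hcPtE]
    exact lt_add_of_pos_right 1 (by positivity)
  · have htE_pos : 0 < tE s x := by
      rw [htE]
      exact div_pos (neg_pos.2 hsEE) (by positivity)
    exact pos_of_mul_pos_left (one_pos.trans_le hge) htE_pos.le
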